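/- arXiv:2205.03279 — 3 statements merged into one kernel-verified Lean document; each statement's English description precedes it below -/
import Mathlib

section
/- Let ρ, π be probability densities and R measurable with ρ e^{-R} and π e^{-R} integrable and positive normalizers η[ρ], η[π]. Then the risk-seeking objective B[π] = −log ∫ π e^{-R} satisfies B[π] = D[p*_ρ ∥ π e^{-R}] − D[p*_ρ ∥ p*_π], where p*_ρ = ρ e^{-R}/η[ρ] and p*_π = π e^{-R}/η[π]. Consequently B[π] ≤ D[p*_ρ ∥ π e^{-R}], i.e., the M-projection objective majorizes the risk-sensitive objective up to constants independent of π. -/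
open MeasureTheory Real

/-- The M-projection objective majorizes the risk-sensitive objective:
`B[pol] = −log ∫ pol e^{-R} = D[p*_ρ ∥ pol e^{-R}] − D[p*_ρ ∥ p*_π]`, hence
`B[pol] ≤ D[p*_ρ ∥ pol e^{-R}]`, where `p*_q = q e^{-R}/η[q]` and `η[q] = ∫ q e^{-R}`. -/
theorem risk_sensitive_majorized_by_Mprojection
    {X : Type*} [MeasurableSpace X] (μ : Measure X) (ρ pol R : X → ℝ)
    (hρm : Measurable ρ) (hπm : Measurable pol) (hRm : Measurable R)
    (hρ0 : ∀ x, 0 ≤ ρ x) (hπ0 : ∀ x, 0 ≤ pol x)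
    (hρ1 : ∫ x, ρ x ∂μ = 1) (hπ1 : ∫ x, pol x ∂μ = 1)
    (hac : ∀ x, 0 < ρ x → 0 < pol x)
    (ηρ ηπ : ℝ)
    (hηρdef : ηρ = ∫ x, ρ x * Real.exp (-R x) ∂μ) (hηρpos : 0 < ηρ)
    (hηπdef : ηπ = ∫ x, pol x * Real.exp (-R x) ∂μ) (hηπpos : 0 < ηπ)
    (hint1 : Integrable (fun x =>
      (ρ x * Real.exp (-R x) / ηρ) *
        Real.log ((ρ x * Real.exp (-R x) / ηρ) / (pol x * Real.exp (-R x)))) μ)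
    (hint2 : Integrable (fun x =>
      (ρ x * Real.exp (-R x) / ηρ) *
        Real.log ((ρ x * Real.exp (-R x) / ηρ) / (pol x * Real.exp (-R x) / ηπ))) μ) :
    (-Real.log (∫ x, pol x * Real.exp (-R x) ∂μ) =
        (∫ x, (ρ x * Real.exp (-R x) / ηρ) *
            Real.log ((ρ x * Real.exp (-R x) / ηρ) / (pol x * Real.exp (-R x))) ∂μ) -
          ∫ x, (ρ x * Real.exp (-R x) / ηρ) *
            Real.log ((ρ x * Real.exp (-R x) / ηρ) / (pol x * Real.exp (-R x) / ηπ)) ∂μ) ∧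
      (-Real.log (∫ x, pol x * Real.exp (-R x) ∂μ) ≤
        ∫ x, (ρ x * Real.exp (-R x) / ηρ) *
          Real.log ((ρ x * Real.exp (-R x) / ηρ) / (pol x * Real.exp (-R x))) ∂μ) := by
  have hIρ : Integrable (fun x => ρ x * Real.exp (-R x)) μ := by
    by_contra h
    rw [integral_undef h] at hηρdef
    exact hηρpos.ne' hηρdef
  have hIπ : Integrable (fun x => pol x * Real.exp (-R x)) μ := by
    by_contra h
    rw [integral_undef h] at hηπdef
    exact hηπpos.ne' hηπdef
  have hplint : Integrable (fun x => ρ x * Real.exp (-R x) / ηρ) μ := hIρ.div_const _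
  have hqint : Integrable (fun x => pol x * Real.exp (-R x) / ηπ) μ := hIπ.div_const _
  have hp1 : ∫ x, ρ x * Real.exp (-R x) / ηρ ∂μ = 1 := by
    rw [integral_div, ← hηρdef, div_self hηρpos.ne']
  have hq1 : ∫ x, pol x * Real.exp (-R x) / ηπ ∂μ = 1 := by
    rw [integral_div, ← hηπdef, div_self hηπpos.ne']
  have hdiff : ∀ x,
      (ρ x * Real.exp (-R x) / ηρ) *
          Real.log ((ρ x * Real.exp (-R x) / ηρ) / (pol x * Real.exp (-R x)))
        - (ρ x * Real.exp (-R x) / ηρ) *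
          Real.log ((ρ x * Real.exp (-R x) / ηρ) / (pol x * Real.exp (-R x) / ηπ))
      = (ρ x * Real.exp (-R x) / ηρ) * (-Real.log ηπ) := by
    intro x
    rcases eq_or_lt_of_le (hρ0 x) with h0 | h0
    · simp [← h0]
    · have hpolpos := hac x h0
      have hqe : 0 < pol x * Real.exp (-R x) := mul_pos hpolpos (Real.exp_pos _)
      have hp : 0 < ρ x * Real.exp (-R x) / ηρ := div_pos (mul_pos h0 (Real.exp_pos _)) hηρpos
      rw [← mul_sub]
      congr 1
      rw [Real.log_div hp.ne' hqe.ne',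
        Real.log_div hp.ne' (div_pos hqe hηπpos).ne',
        Real.log_div hqe.ne' hηπpos.ne']
      ring
  have key : (∫ x, (ρ x * Real.exp (-R x) / ηρ) *
        Real.log ((ρ x * Real.exp (-R x) / ηρ) / (pol x * Real.exp (-R x))) ∂μ)
      - (∫ x, (ρ x * Real.exp (-R x) / ηρ) *
        Real.log ((ρ x * Real.exp (-R x) / ηρ) / (pol x * Real.exp (-R x) / ηπ)) ∂μ)
      = -Real.log ηπ := by
    rw [← integral_sub hint1 hint2]
    calc (∫ x, (ρ x * Real.exp (-R x) / ηρ) *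
          Real.log ((ρ x * Real.exp (-R x) / ηρ) / (pol x * Real.exp (-R x)))
        - (ρ x * Real.exp (-R x) / ηρ) *
          Real.log ((ρ x * Real.exp (-R x) / ηρ) / (pol x * Real.exp (-R x) / ηπ)) ∂μ)
        = ∫ x, (ρ x * Real.exp (-R x) / ηρ) * (-Real.log ηπ) ∂μ := by
          exact integral_congr_ae (Filter.Eventually.of_forall hdiff)
      _ = (∫ x, ρ x * Real.exp (-R x) / ηρ ∂μ) * (-Real.log ηπ) := integral_mul_const _ _
      _ = -Real.log ηπ := by rw [hp1, one_mul]
  have hKL : 0 ≤ ∫ x, (ρ x * Real.exp (-R x) / ηρ) *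
      Real.log ((ρ x * Real.exp (-R x) / ηρ) / (pol x * Real.exp (-R x) / ηπ)) ∂μ := by
    have hmono : ∀ x, ρ x * Real.exp (-R x) / ηρ - pol x * Real.exp (-R x) / ηπ ≤
        (ρ x * Real.exp (-R x) / ηρ) *
          Real.log ((ρ x * Real.exp (-R x) / ηρ) / (pol x * Real.exp (-R x) / ηπ)) := by
      intro x
      rcases eq_or_lt_of_le (hρ0 x) with h0 | h0
      · have : 0 ≤ pol x * Real.exp (-R x) / ηπ :=
          div_nonneg (mul_nonneg (hπ0 x) (Real.exp_pos _).le) hηπpos.le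
        simp [← h0]
        linarith
      · have hpolpos := hac x h0
        have hq : 0 < pol x * Real.exp (-R x) / ηπ :=
          div_pos (mul_pos hpolpos (Real.exp_pos _)) hηπpos
        have hp : 0 < ρ x * Real.exp (-R x) / ηρ := div_pos (mul_pos h0 (Real.exp_pos _)) hηρpos
        set a := ρ x * Real.exp (-R x) / ηρ
        set b := pol x * Real.exp (-R x) / ηπ
        have hlog := Real.log_le_sub_one_of_pos (div_pos hq hp)
        have hL : Real.log (b / a) = -Real.log (a / b) := by
          rw [← Real.log_inv, inv_div]
        rw [hL] at hlog
        have hba : a * (b / a) = b := mul_div_cancel₀ b hp.ne'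
        nlinarith [mul_le_mul_of_nonneg_left hlog hp.le]
    have h0 : (0:ℝ) = ∫ x, (ρ x * Real.exp (-R x) / ηρ - pol x * Real.exp (-R x) / ηπ) ∂μ := by
      rw [integral_sub hplint hqint, hp1, hq1, sub_self]
    rw [h0]
    exact integral_mono (hplint.sub hqint) hint2 hmono
  constructor
  · rw [← hηπdef, key]
  · rw [← hηπdef]
    linarith [key]
end

section
/- Gibbs variational principle: let ρ be a probability density and f a measurable function with ρ e^{-f} integrable. Then over all probability densities π, the functional J[π] = E_π[f] + D[π ∥ ρ] satisfies J[π] ≥ −log ∫ ρ e^{-f}, with equality attained uniquely (a.e.) by π*(x) = ρ(x) e^{-f(x)} / ∫ ρ e^{-f}. -/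
/-!
Writing `π* = ρ e^{-f} / η` for the tilted density, one has pointwise
`π log (π / π*) = π f + π log (π / ρ) + π log η`, so that
`E_π[f] + D[π ∥ ρ] = -log η + D[π ∥ π*]`. Everything then follows from Gibbs' inequality
`D[π ∥ π*] ≥ 0`, with equality only for `π = π*` a.e.; the latter comes from writing
`D[p ∥ q] = ∫ q · klFun (p / q)` with `klFun x = x log x + 1 - x ≥ 0`,
which vanishes only at `1`.
-/

open MeasureTheory Real InformationTheory

lemma mul_klFun_div {p q : ℝ} (hp : 0 ≤ p) (hpq : 0 < p → 0 < q) :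
    q * klFun (p / q) = p * log (p / q) + q - p := by
  rcases eq_or_ne q 0 with rfl | hq
  · obtain rfl : p = 0 := le_antisymm (not_lt.mp fun h => (hpq h).ne rfl) hp
    simp
  · rw [klFun_apply]
    field_simp

lemma eq_of_mul_klFun_div_eq_zero {p q : ℝ} (hp : 0 ≤ p) (hq : 0 ≤ q)
    (hpq : 0 < p → 0 < q) (h : q * klFun (p / q) = 0) : p = q := by
  rcases hq.eq_or_lt with rfl | hq
  · exact le_antisymm (not_lt.mp fun h => (hpq h).ne rfl) hp
  · have hklFun : klFun (p / q) = 0 := (mul_eq_zero.mp h).resolve_left hq.ne'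
    rw [klFun_eq_zero_iff (div_nonneg hp hq.le), div_eq_one_iff_eq hq.ne'] at hklFun
    exact hklFun

section GibbsInequality

variable {X : Type*} [MeasurableSpace X] {μ : Measure X} {p q : X → ℝ}

lemma integral_mul_klFun_div (hp0 : ∀ x, 0 ≤ p x) (hpq : ∀ x, 0 < p x → 0 < q x)
    (hp : Integrable p μ) (hq : Integrable q μ) (hint : ∫ x, p x ∂μ = ∫ x, q x ∂μ)
    (hlog : Integrable (fun x => p x * log (p x / q x)) μ) :
    Integrable (fun x => q x * klFun (p x / q x)) μ ∧
      ∫ x, q x * klFun (p x / q x) ∂μ = ∫ x, p x * log (p x / q x) ∂μ := by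
  have hfun : (fun x => q x * klFun (p x / q x)) = fun x => p x * log (p x / q x) + q x - p x :=
    funext fun x => mul_klFun_div (hp0 x) (hpq x)
  rw [hfun]
  have hsum : Integrable (fun x => p x * log (p x / q x) + q x) μ := hlog.add hq
  refine ⟨hsum.sub hp, ?_⟩
  rw [integral_sub hsum hp, integral_add hlog hq, hint, add_sub_cancel_right]

lemma integral_mul_log_div_nonneg (hp0 : ∀ x, 0 ≤ p x) (hq0 : ∀ x, 0 ≤ q x)
    (hpq : ∀ x, 0 < p x → 0 < q x) (hp : Integrable p μ) (hq : Integrable q μ)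
    (hint : ∫ x, p x ∂μ = ∫ x, q x ∂μ)
    (hlog : Integrable (fun x => p x * log (p x / q x)) μ) :
    0 ≤ ∫ x, p x * log (p x / q x) ∂μ := by
  rw [← (integral_mul_klFun_div hp0 hpq hp hq hint hlog).2]
  exact integral_nonneg fun x => mul_nonneg (hq0 x) (klFun_nonneg (div_nonneg (hp0 x) (hq0 x)))

lemma ae_eq_of_integral_mul_log_div_eq_zero (hp0 : ∀ x, 0 ≤ p x) (hq0 : ∀ x, 0 ≤ q x)
    (hpq : ∀ x, 0 < p x → 0 < q x) (hp : Integrable p μ) (hq : Integrable q μ)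
    (hint : ∫ x, p x ∂μ = ∫ x, q x ∂μ)
    (hlog : Integrable (fun x => p x * log (p x / q x)) μ)
    (hzero : ∫ x, p x * log (p x / q x) ∂μ = 0) :
    p =ᵐ[μ] q := by
  obtain ⟨hklInt, hklEq⟩ := integral_mul_klFun_div hp0 hpq hp hq hint hlog
  have hkl : (fun x => q x * klFun (p x / q x)) =ᵐ[μ] 0 :=
    (integral_eq_zero_iff_of_nonneg
      (fun x => mul_nonneg (hq0 x) (klFun_nonneg (div_nonneg (hp0 x) (hq0 x)))) hklInt).mp
      (hklEq.trans hzero)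
  filter_upwards [hkl] with x hx
  exact eq_of_mul_klFun_div_eq_zero (hp0 x) (hq0 x) (hpq x) hx

end GibbsInequality

lemma mul_log_div_tilt {p r t η : ℝ} (hp : 0 ≤ p) (hη : 0 < η) (hpr : 0 < p → 0 < r) :
    p * log (p / (r * exp (-t) / η)) = p * t + p * log (p / r) + p * log η := by
  rcases hp.eq_or_lt with rfl | hp
  · simp
  · have hr := hpr hp
    rw [log_div hp.ne' (by positivity), log_div (by positivity) hη.ne',
      log_mul hr.ne' (exp_pos _).ne', log_exp, log_div hp.ne' hr.ne']
    ring

section Gibbs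

variable {X : Type*} {ρ f pol : X → ℝ} {η : ℝ}

noncomputable def gibbsDensity (ρ f : X → ℝ) (η : ℝ) (x : X) : ℝ := ρ x * exp (-f x) / η

lemma gibbsDensity_nonneg (hρ0 : ∀ x, 0 ≤ ρ x) (hη : 0 < η) (x : X) :
    0 ≤ gibbsDensity ρ f η x := by
  unfold gibbsDensity
  have := hρ0 x
  positivity

lemma gibbsDensity_pos {x : X} (hρ : 0 < ρ x) (hη : 0 < η) : 0 < gibbsDensity ρ f η x := by
  unfold gibbsDensity
  positivity

lemma pos_of_gibbsDensity_pos (hρ0 : ∀ x, 0 ≤ ρ x) {x : X} (h : 0 < gibbsDensity ρ f η x) :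
    0 < ρ x := by
  refine (hρ0 x).lt_of_ne fun hρx => h.ne' ?_
  simp [gibbsDensity, ← hρx]

lemma gibbsDensity_mul_log_div (hρ0 : ∀ x, 0 ≤ ρ x) (hη : 0 < η) (x : X) :
    gibbsDensity ρ f η x * log (gibbsDensity ρ f η x / ρ x) =
      -(gibbsDensity ρ f η x * f x) - gibbsDensity ρ f η x * log η := by
  have h := mul_log_div_tilt (t := f x) (gibbsDensity_nonneg (f := f) hρ0 hη x) hη
    (pos_of_gibbsDensity_pos hρ0)
  rw [← gibbsDensity, log_div_self, mul_zero] at h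
  linarith

variable [MeasurableSpace X] {μ : Measure X}

lemma integrable_gibbsDensity (h : Integrable (fun x => ρ x * exp (-f x)) μ) :
    Integrable (gibbsDensity ρ f η) μ :=
  h.div_const η

lemma integral_gibbsDensity (hηdef : η = ∫ x, ρ x * exp (-f x) ∂μ) (hη : 0 < η) :
    ∫ x, gibbsDensity ρ f η x ∂μ = 1 := by
  simp only [gibbsDensity]
  rw [integral_div, ← hηdef, div_self hη.ne']

lemma integral_mul_log_div_gibbsDensity (hη : 0 < η) (hp0 : ∀ x, 0 ≤ pol x)
    (hp1 : ∫ x, pol x ∂μ = 1) (hpρ : ∀ x, 0 < pol x → 0 < ρ x)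
    (hf : Integrable (fun x => pol x * f x) μ)
    (hD : Integrable (fun x => pol x * log (pol x / ρ x)) μ) :
    Integrable (fun x => pol x * log (pol x / gibbsDensity ρ f η x)) μ ∧
      ∫ x, pol x * log (pol x / gibbsDensity ρ f η x) ∂μ =
        (∫ x, pol x * f x ∂μ) + (∫ x, pol x * log (pol x / ρ x) ∂μ) + log η := by
  have hfun : (fun x => pol x * log (pol x / gibbsDensity ρ f η x)) =
      fun x => pol x * f x + pol x * log (pol x / ρ x) + pol x * log η :=
    funext fun x => mul_log_div_tilt (hp0 x) hη (hpρ x)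
  have hp : Integrable pol μ := .of_integral_ne_zero (by rw [hp1]; exact one_ne_zero)
  have hsum : Integrable (fun x => pol x * f x + pol x * log (pol x / ρ x)) μ := hf.add hD
  rw [hfun]
  refine ⟨hsum.add (hp.mul_const _), ?_⟩
  rw [integral_add hsum (hp.mul_const _), integral_add hf hD, integral_mul_const, hp1,
    one_mul]

lemma integral_gibbsDensity_mul_add_integral_mul_log_div (hρ0 : ∀ x, 0 ≤ ρ x)
    (hηdef : η = ∫ x, ρ x * exp (-f x) ∂μ) (hη : 0 < η)
    (hηfin : Integrable (fun x => ρ x * exp (-f x)) μ)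
    (hf : Integrable (fun x => gibbsDensity ρ f η x * f x) μ) :
    (∫ x, gibbsDensity ρ f η x * f x ∂μ) +
      ∫ x, gibbsDensity ρ f η x * log (gibbsDensity ρ f η x / ρ x) ∂μ = -log η := by
  have hneg : Integrable (fun x => -(gibbsDensity ρ f η x * f x)) μ := hf.neg
  rw [funext (gibbsDensity_mul_log_div hρ0 hη), integral_sub hneg
    ((integrable_gibbsDensity hηfin).mul_const _), integral_neg, integral_mul_const,
    integral_gibbsDensity hηdef hη]
  ring

end Gibbs

theorem gibbs_variational_principle_general
    {X : Type*} [MeasurableSpace X] (μ : Measure X) (ρ f : X → ℝ)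
    (hρ0 : ∀ x, 0 ≤ ρ x)
    (η : ℝ) (hηdef : η = ∫ x, ρ x * Real.exp (-f x) ∂μ) (hηpos : 0 < η)
    (hηfin : Integrable (fun x => ρ x * Real.exp (-f x)) μ)
    (hintstar : Integrable (fun x => (ρ x * Real.exp (-f x) / η) * f x) μ) :
    (∀ pol : X → ℝ, Measurable pol → (∀ x, 0 ≤ pol x) → (∫ x, pol x ∂μ) = 1 →
        (∀ x, 0 < pol x → 0 < ρ x) →
        Integrable (fun x => pol x * f x) μ →
        Integrable (fun x => pol x * Real.log (pol x / ρ x)) μ →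
        -Real.log η ≤
          (∫ x, pol x * f x ∂μ) + ∫ x, pol x * Real.log (pol x / ρ x) ∂μ) ∧
    ((∫ x, (ρ x * Real.exp (-f x) / η) * f x ∂μ) +
        ∫ x, (ρ x * Real.exp (-f x) / η) *
          Real.log ((ρ x * Real.exp (-f x) / η) / ρ x) ∂μ = -Real.log η) ∧
    (∀ pol : X → ℝ, Measurable pol → (∀ x, 0 ≤ pol x) → (∫ x, pol x ∂μ) = 1 →
        (∀ x, 0 < pol x → 0 < ρ x) →
        Integrable (fun x => pol x * f x) μ →
        Integrable (fun x => pol x * Real.log (pol x / ρ x)) μ →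
        (∫ x, pol x * f x ∂μ) + (∫ x, pol x * Real.log (pol x / ρ x) ∂μ) = -Real.log η →
        pol =ᵐ[μ] fun x => ρ x * Real.exp (-f x) / η) := by
  have key (pol : X → ℝ) (hp0 : ∀ x, 0 ≤ pol x) (hp1 : ∫ x, pol x ∂μ = 1)
      (hpρ : ∀ x, 0 < pol x → 0 < ρ x) (hf : Integrable (fun x => pol x * f x) μ)
      (hD : Integrable (fun x => pol x * log (pol x / ρ x)) μ) :
      -log η ≤ (∫ x, pol x * f x ∂μ) + ∫ x, pol x * log (pol x / ρ x) ∂μ ∧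
        ((∫ x, pol x * f x ∂μ) + ∫ x, pol x * log (pol x / ρ x) ∂μ = -log η →
          pol =ᵐ[μ] gibbsDensity ρ f η) := by
    have hp : Integrable pol μ := .of_integral_ne_zero (by rw [hp1]; exact one_ne_zero)
    have hpq x (hx : 0 < pol x) : 0 < gibbsDensity ρ f η x := gibbsDensity_pos (hpρ x hx) hηpos
    have hint : ∫ x, pol x ∂μ = ∫ x, gibbsDensity ρ f η x ∂μ := by
      rw [hp1, integral_gibbsDensity hηdef hηpos]
    have hq0 := gibbsDensity_nonneg (f := f) hρ0 hηpos
    have hq := integrable_gibbsDensity (η := η) hηfin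
    obtain ⟨hlog, hKL⟩ := integral_mul_log_div_gibbsDensity hηpos hp0 hp1 hpρ hf hD
    refine ⟨?_, fun hJ => ae_eq_of_integral_mul_log_div_eq_zero hp0 hq0 hpq hp hq hint hlog ?_⟩
    · linarith [integral_mul_log_div_nonneg hp0 hq0 hpq hp hq hint hlog]
    · rw [hKL, hJ, neg_add_cancel]
  exact ⟨fun pol _ hp0 hp1 hpρ hf hD => (key pol hp0 hp1 hpρ hf hD).1,
    integral_gibbsDensity_mul_add_integral_mul_log_div hρ0 hηdef hηpos hηfin hintstar,
    fun pol _ hp0 hp1 hpρ hf hD => (key pol hp0 hp1 hpρ hf hD).2⟩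

/-- Gibbs variational principle: over probability densities `pol` (absolutely continuous
w.r.t. `ρ`), `E_pol[f] + D[pol ∥ ρ] ≥ −log ∫ ρ e^{-f}`, the minimum is attained by the
tilted density `pol* = ρ e^{-f}/η`, and any minimizer equals `pol*` a.e. -/
theorem gibbs_variational_principle
    {X : Type*} [MeasurableSpace X] (μ : Measure X) (ρ f : X → ℝ)
    (hρm : Measurable ρ) (hfm : Measurable f)
    (hρ0 : ∀ x, 0 ≤ ρ x) (hρ1 : ∫ x, ρ x ∂μ = 1)
    (η : ℝ) (hηdef : η = ∫ x, ρ x * Real.exp (-f x) ∂μ) (hηpos : 0 < η)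
    (hηfin : Integrable (fun x => ρ x * Real.exp (-f x)) μ)
    (hintstar : Integrable (fun x => (ρ x * Real.exp (-f x) / η) * f x) μ) :
    (∀ pol : X → ℝ, Measurable pol → (∀ x, 0 ≤ pol x) → (∫ x, pol x ∂μ) = 1 →
        (∀ x, 0 < pol x → 0 < ρ x) →
        Integrable (fun x => pol x * f x) μ →
        Integrable (fun x => pol x * Real.log (pol x / ρ x)) μ →
        -Real.log η ≤
          (∫ x, pol x * f x ∂μ) + ∫ x, pol x * Real.log (pol x / ρ x) ∂μ) ∧
    ((∫ x, (ρ x * Real.exp (-f x) / η) * f x ∂μ) +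
        ∫ x, (ρ x * Real.exp (-f x) / η) *
          Real.log ((ρ x * Real.exp (-f x) / η) / ρ x) ∂μ = -Real.log η) ∧
    (∀ pol : X → ℝ, Measurable pol → (∀ x, 0 ≤ pol x) → (∫ x, pol x ∂μ) = 1 →
        (∀ x, 0 < pol x → 0 < ρ x) →
        Integrable (fun x => pol x * f x) μ →
        Integrable (fun x => pol x * Real.log (pol x / ρ x)) μ →
        (∫ x, pol x * f x ∂μ) + (∫ x, pol x * Real.log (pol x / ρ x) ∂μ) = -Real.log η →
        pol =ᵐ[μ] fun x => ρ x * Real.exp (-f x) / η) :=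
  gibbs_variational_principle_general μ ρ f hρ0 η hηdef hηpos hηfin hintstar
end

section
/- Repeated exponential tilting concentrates on the essential infimum: for ρ a probability density and R bounded measurable, the n-fold tilted density ρ_n = ρ e^{−nR}/∫ρe^{−nR} satisfies E_{ρ_n}[R] → ess inf_ρ R as n → ∞. -/
open MeasureTheory Real Filter Topology

/-!
With `ν = ρ μ`, write `Z t = ∫ e^{-tR} dν` and `m = essInf R ν`. Since `R ≥ m` almost
everywhere, the tilted mean `(∫ e^{-tR} R dν) / Z t` is at least `m`. For `m < b < c`, the set
`{R < b}` has positive mass, so `Z t ≥ e^{-tb} ν{R < b}`, while the part of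
`∫ e^{-tR} (R - c) dν` that is positive lives on `{R > c}` and is `O(e^{-tc})`. Hence the tilted
mean is at most `c + O(e^{-t(c-b)})`, which tends to `c`.
-/

lemma exp_neg_mul_mul_sub_le {t y c D : ℝ} (ht : 0 ≤ t) (hD : 0 ≤ D) (hyD : y - c ≤ D) :
    exp (-t * y) * (y - c) ≤ D * exp (-t * c) := by
  rcases le_or_gt y c with hyc | hcy
  · nlinarith [exp_pos (-t * y), exp_pos (-t * c)]
  · have hexp : exp (-t * y) ≤ exp (-t * c) := exp_le_exp.2 (by nlinarith)
    nlinarith [exp_pos (-t * y)]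

namespace MeasureTheory

variable {X : Type*} [MeasurableSpace X]

lemma integral_withDensity_ofReal {μ : Measure X} {ρ : X → ℝ} (hρm : Measurable ρ)
    (hρ0 : ∀ x, 0 ≤ ρ x) (g : X → ℝ) :
    ∫ x, g x ∂μ.withDensity (fun x => ENNReal.ofReal (ρ x)) = ∫ x, ρ x * g x ∂μ := by
  rw [integral_withDensity_eq_integral_toReal_smul hρm.ennreal_ofReal
    (ae_of_all _ fun _ => ENNReal.ofReal_lt_top)]
  simp only [ENNReal.toReal_ofReal (hρ0 _), smul_eq_mul]

lemma isProbabilityMeasure_withDensity_ofReal {μ : Measure X} {ρ : X → ℝ}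
    (hρ0 : ∀ x, 0 ≤ ρ x) (hρ1 : ∫ x, ρ x ∂μ = 1) :
    IsProbabilityMeasure (μ.withDensity fun x => ENNReal.ofReal (ρ x)) := by
  have hρint : Integrable ρ μ := by
    by_contra h
    rw [integral_undef h] at hρ1
    exact zero_ne_one hρ1
  constructor
  rw [withDensity_apply _ MeasurableSet.univ, setLIntegral_univ,
    ← ofReal_integral_eq_lintegral_ofReal hρint (ae_of_all _ hρ0), hρ1, ENNReal.ofReal_one]

noncomputable def tiltedMean (ν : Measure X) (R : X → ℝ) (t : ℝ) : ℝ :=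
  (∫ x, exp (-t * R x) * R x ∂ν) / ∫ x, exp (-t * R x) ∂ν

variable {ν : Measure X} {R : X → ℝ} {C : ℝ}

lemma measure_lt_ne_zero_of_essInf_lt [NeZero ν] (hRC : ∀ x, |R x| ≤ C) {b : ℝ}
    (hb : essInf R ν < b) :
    ν {x | R x < b} ≠ 0 := by
  intro h
  have : (ae ν).NeBot := ae_neBot.2 (NeZero.ne ν)
  have hae : ∀ᵐ x ∂ν, b ≤ R x := by
    rw [ae_iff]
    simpa only [not_le] using h
  have hcobdd : IsCoboundedUnder (· ≥ ·) (ae ν) R :=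
    (isBoundedUnder_of ⟨C, fun x => le_of_abs_le (hRC x)⟩).isCoboundedUnder_ge
  exact (le_essInf_of_ae_le b hae hcobdd).not_gt hb

variable [IsFiniteMeasure ν] (hR : Measurable R) (hRC : ∀ x, |R x| ≤ C)
include hR hRC

lemma integrable_exp_neg_mul (t : ℝ) : Integrable (fun x => exp (-t * R x)) ν := by
  refine .of_bound (hR.const_mul _).exp.aestronglyMeasurable (exp (|t| * C)) (ae_of_all _ ?_)
  intro x
  rw [norm_of_nonneg (exp_pos _).le, exp_le_exp, neg_mul]
  calc -(t * R x) ≤ |t * R x| := neg_le_abs _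
    _ ≤ |t| * C := by rw [abs_mul]; exact mul_le_mul_of_nonneg_left (hRC x) (abs_nonneg t)

lemma integrable_exp_neg_mul_mul (t : ℝ) : Integrable (fun x => exp (-t * R x) * R x) ν :=
  (integrable_exp_neg_mul hR hRC t).mul_bdd hR.aestronglyMeasurable (ae_of_all _ hRC)

lemma exp_neg_mul_mul_measureReal_le_integral {t : ℝ} (ht : 0 ≤ t) (b : ℝ) :
    exp (-t * b) * ν.real {x | R x < b} ≤ ∫ x, exp (-t * R x) ∂ν := by
  have hint := integrable_exp_neg_mul hR hRC (ν := ν) t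
  calc exp (-t * b) * ν.real {x | R x < b} ≤ ∫ x in {x | R x < b}, exp (-t * R x) ∂ν :=
        setIntegral_ge_of_const_le_real (measurableSet_lt hR measurable_const)
          (measure_ne_top _ _) (fun x hx => exp_le_exp.2 (by nlinarith [hx.out.le]))
          hint.integrableOn
    _ ≤ ∫ x, exp (-t * R x) ∂ν :=
        setIntegral_le_integral hint (ae_of_all _ fun x => (exp_pos _).le)

lemma essInf_le_tiltedMean [NeZero ν] (t : ℝ) : essInf R ν ≤ tiltedMean ν R t := by
  have hZ : 0 < ∫ x, exp (-t * R x) ∂ν := integral_exp_pos (integrable_exp_neg_mul hR hRC t)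
  have hm : ∀ᵐ x ∂ν, essInf R ν ≤ R x :=
    ae_essInf_le (isBoundedUnder_of ⟨-C, fun x => neg_le_of_abs_le (hRC x)⟩)
  rw [tiltedMean, le_div_iff₀ hZ, ← integral_const_mul]
  refine integral_mono_ae ((integrable_exp_neg_mul hR hRC t).const_mul _)
    (integrable_exp_neg_mul_mul hR hRC t) ?_
  filter_upwards [hm] with x hx
  rw [mul_comm]
  exact mul_le_mul_of_nonneg_left hx (exp_pos _).le

lemma tiltedMean_le {t b c D : ℝ} (ht : 0 ≤ t) (hb : ν {x | R x < b} ≠ 0) (hD : 0 ≤ D)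
    (hRD : ∀ x, R x - c ≤ D) :
    tiltedMean ν R t ≤
      c + D * ν.real Set.univ / ν.real {x | R x < b} * exp (-t * (c - b)) := by
  set Z := ∫ x, exp (-t * R x) ∂ν
  have hA : 0 < ν.real {x | R x < b} := ENNReal.toReal_pos hb (measure_ne_top _ _)
  have hZ : exp (-t * b) * ν.real {x | R x < b} ≤ Z :=
    exp_neg_mul_mul_measureReal_le_integral hR hRC ht b
  have hZ0 : 0 < Z := lt_of_lt_of_le (by positivity) hZ
  have hnum :
      ∫ x, exp (-t * R x) * R x ∂ν - c * Z ≤ D * exp (-t * c) * ν.real Set.univ := by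
    rw [← integral_const_mul, ← integral_sub (integrable_exp_neg_mul_mul hR hRC t)
      ((integrable_exp_neg_mul hR hRC t).const_mul c)]
    have hint := (integrable_exp_neg_mul_mul hR hRC (ν := ν) t).sub
      ((integrable_exp_neg_mul hR hRC t).const_mul c)
    calc ∫ x, (exp (-t * R x) * R x - c * exp (-t * R x)) ∂ν
        ≤ ∫ _, D * exp (-t * c) ∂ν := integral_mono hint (integrable_const _) fun x => by
          simpa only [mul_sub, mul_comm c] using exp_neg_mul_mul_sub_le ht hD (hRD x)
      _ = D * exp (-t * c) * ν.real Set.univ := by rw [integral_const, smul_eq_mul, mul_comm]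
  have hsplit : exp (-t * c) = exp (-t * b) * exp (-t * (c - b)) := by
    rw [← exp_add]; ring_nf
  have hexp_b : exp (-t * b) ≤ Z / ν.real {x | R x < b} := (le_div_iff₀ hA).2 hZ
  rw [hsplit] at hnum
  rw [tiltedMean, div_le_iff₀ hZ0]
  calc ∫ x, exp (-t * R x) * R x ∂ν
      ≤ c * Z + D * ν.real Set.univ * exp (-t * (c - b)) * exp (-t * b) := by linarith
    _ ≤ c * Z + D * ν.real Set.univ * exp (-t * (c - b)) * (Z / ν.real {x | R x < b}) := by
        gcongr
    _ = _ := by field_simp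

variable [NeZero ν]

theorem tendsto_tiltedMean_essInf : Tendsto (tiltedMean ν R) atTop (𝓝 (essInf R ν)) := by
  refine tendsto_order.2 ⟨fun a ha => .of_forall fun t =>
    ha.trans_le (essInf_le_tiltedMean hR hRC t), fun d hd => ?_⟩
  set m := essInf R ν
  set c := (m + d) / 2 with hc_def
  set b := (m + c) / 2 with hb_def
  set K := (|C| + |c|) * ν.real Set.univ / ν.real {x | R x < b}
  have hdecay : Tendsto (fun t : ℝ => K * exp (-t * (c - b))) atTop (𝓝 0) := by
    have hcb : 0 < c - b := by linarith
    simpa only [mul_zero, neg_mul, Function.comp_def, id] using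
      ((tendsto_exp_neg_atTop_nhds_zero.comp (tendsto_id.atTop_mul_const hcb)).const_mul K)
  filter_upwards [eventually_ge_atTop 0, hdecay.eventually_lt_const (by linarith : 0 < d - c)]
    with t ht hsmall
  have hA : ν {x | R x < b} ≠ 0 := measure_lt_ne_zero_of_essInf_lt hRC (by linarith)
  have hRD : ∀ x, R x - c ≤ |C| + |c| := fun x => by
    linarith [le_of_abs_le (hRC x), le_abs_self C, neg_abs_le c]
  linarith [tiltedMean_le hR hRC ht hA (by positivity) hRD]

end MeasureTheory

theorem repeated_tilting_concentrates_on_essInf_general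
    {X : Type*} [MeasurableSpace X] (μ : Measure X) (ρ R : X → ℝ)
    (hρm : Measurable ρ) (hRm : Measurable R)
    (hρ0 : ∀ x, 0 ≤ ρ x) (hρ1 : ∫ x, ρ x ∂μ = 1)
    (hRb : ∃ C, ∀ x, |R x| ≤ C) :
    Tendsto (fun n : ℕ =>
        ∫ x, (ρ x * Real.exp (-(n : ℝ) * R x) /
          ∫ y, ρ y * Real.exp (-(n : ℝ) * R y) ∂μ) * R x ∂μ)
      atTop (𝓝 (essInf R (μ.withDensity fun x => ENNReal.ofReal (ρ x)))) := by
  obtain ⟨C, hRC⟩ := hRb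
  have := isProbabilityMeasure_withDensity_ofReal (μ := μ) hρ0 hρ1
  refine (tendsto_tiltedMean_essInf hRm hRC).comp tendsto_natCast_atTop_atTop |>.congr fun n => ?_
  simp only [Function.comp_apply, tiltedMean, integral_withDensity_ofReal hρm hρ0,
    ← integral_div]
  congr 1 with x
  ring

/-- Repeated exponential tilting concentrates on the essential infimum: for a
probability density `ρ` and bounded measurable `R`, the `n`-fold tilted density
`ρ_n = ρ e^{−nR} / ∫ ρ e^{−nR}` satisfies `E_{ρ_n}[R] → essinf_ρ R` as `n → ∞`,
where the essential infimum is taken with respect to the measure `ρ dμ`. -/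
theorem repeated_tilting_concentrates_on_essInf
    {X : Type*} [MeasurableSpace X] (μ : Measure X) (ρ R : X → ℝ)
    (hρm : Measurable ρ) (hRm : Measurable R)
    (hρ0 : ∀ x, 0 ≤ ρ x) (hρ1 : ∫ x, ρ x ∂μ = 1)
    (hRb : ∃ C, ∀ x, |R x| ≤ C)
    (hηpos : ∀ n : ℕ, 0 < ∫ x, ρ x * Real.exp (-(n : ℝ) * R x) ∂μ) :
    Tendsto (fun n : ℕ =>
        ∫ x, (ρ x * Real.exp (-(n : ℝ) * R x) /
          ∫ y, ρ y * Real.exp (-(n : ℝ) * R y) ∂μ) * R x ∂μ)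
      atTop (𝓝 (essInf R (μ.withDensity fun x => ENNReal.ofReal (ρ x)))) :=
  repeated_tilting_concentrates_on_essInf_general μ ρ R hρm hRm hρ0 hρ1 hRb
end
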